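/- arXiv:2311.02387 — 3 statements merged into one kernel-verified Lean document; each statement's English description precedes it below -/
import Mathlib

section
/- Let $p$ be an odd prime and $G$ the non-abelian group of order $p^3$ and exponent $p$. Suppose $g_1, \dots, g_m \in G$ with $m \ge p+1$ and $g_1 g_2 \cdots g_m \in Z(G)$. Suppose further there exist indices giving a subsequence $h_1, \dots, h_{p-1}, h_p$ of $(g_1,\dots,g_m)$ such that $h_p$ does not commute with the partial product $h_\alpha h_{\alpha+1} \cdots h_\beta$ for any $1 \le \alpha \le \beta \le p-1$. Then there exists a permutation $\sigma$ of $\{1, \dots, m\}$ such that $g_{\sigma(1)} g_{\sigma(2)} \cdots g_{\sigma(m)} = 1$. -/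
/-!
A non-abelian group of order `p³` has centre of order `p` containing every commutator, so
`⁅x, ·⁆` is multiplicative. Write the sequence as `h₁ ⋯ h_{p-1}`, `x = h_p`, rest. Moving `x` to
just after `h_k` (`0 ≤ k ≤ p - 1`) multiplies the (central) total product by the central element
`⁅x, h_{k+1} ⋯ h_{p-1}⁆`, and two of these coincide only if `x` commutes with some
`h_α ⋯ h_β`. So the `p` rearranged products are `p` distinct elements of a centre of order `p`,
and one of them is `1`.
-/

open Subgroup
open scoped commutatorElement

section CardPrimeCube

variable {p : ℕ} [Fact p.Prime] {G : Type*} [Group G]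

theorem card_center_eq_prime_of_card_eq_prime_pow_three (hG : Nat.card G = p ^ 3)
    (hna : ∃ a b : G, a * b ≠ b * a) : Nat.card (center G) = p := by
  have hp : 1 < p := Fact.out (p := p.Prime) |>.one_lt
  obtain ⟨k, hk0, hk⟩ := IsPGroup.card_center_eq_prime_pow hG three_pos
  have hindex : (center G).index * p ^ k = p ^ 3 := by
    rw [← hk, mul_comm, card_mul_index, hG]
  have hk3 : k ≤ 3 := (Nat.pow_dvd_pow_iff_le_right hp).mp (Dvd.intro_left _ hindex)
  obtain rfl | hk2 : k = 1 ∨ 2 ≤ k := by omega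
  · simpa using hk
  have hdvd : Nat.card (G ⧸ center G) ∣ p := by
    refine Dvd.intro (p ^ (k - 2))
      (Nat.eq_of_mul_eq_mul_right (pow_pos (zero_lt_one.trans hp) 2) ?_)
    rw [mul_assoc, ← pow_add, Nat.sub_add_cancel hk2, ← pow_succ']
    exact hindex
  have := isCyclic_of_card_dvd_prime hdvd
  obtain ⟨a, b, hab⟩ := hna
  exact absurd ((isMulCommutative_of_isCyclic_quotient_center_self G).is_comm.comm a b) hab

theorem commutatorElement_mem_center_of_card_eq_prime_pow_three (hG : Nat.card G = p ^ 3)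
    (hna : ∃ a b : G, a * b ≠ b * a) (u v : G) : ⁅u, v⁆ ∈ center G := by
  have hp : 0 < p := Fact.out (p := p.Prime) |>.pos
  have hquot : Nat.card (G ⧸ center G) = p ^ 2 := by
    refine Nat.eq_of_mul_eq_mul_right hp ?_
    rw [← pow_succ, ← hG, ← card_center_eq_prime_of_card_eq_prime_pow_three hG hna,
      mul_comm]
    exact (center G).card_mul_index
  have := IsPGroup.isMulCommutative_of_card_eq_prime_sq hquot
  rw [← QuotientGroup.eq_one_iff, ← QuotientGroup.mk'_apply, map_commutatorElement,
    commutatorElement_eq_one_iff_commute]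
  exact this.is_comm.comm _ _

end CardPrimeCube

section CommutatorsCentral

variable {G : Type*} [Group G]

theorem commutatorElement_mul_right_of_mem_center {a b c : G} (h : ⁅a, c⁆ ∈ center G) :
    ⁅a, b * c⁆ = ⁅a, b⁆ * ⁅a, c⁆ := by
  rw [commutatorElement_mul_right_eq_mul_conj, mul_assoc _ b, mem_center_iff.mp h b,
    mul_assoc, mul_inv_cancel_right]

theorem List.prod_append_cons_append_eq_commutatorElement_mul (a b c : List G) (x : G)
    (h : ⁅x, b.prod⁆ ∈ center G) :
    (a ++ x :: (b ++ c)).prod = ⁅x, b.prod⁆ * (a ++ b ++ x :: c).prod := by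
  have hswap : x * b.prod = ⁅x, b.prod⁆ * (b.prod * x) := by
    rw [commutatorElement_def]; group
  simp only [List.prod_append, List.prod_cons]
  rw [← mul_assoc x, hswap]
  simp only [← mul_assoc]
  rw [mem_center_iff.mp h]

theorem List.Perm.prod_mem_iff_of_commutatorElement_mem {N : Subgroup G} [N.Normal]
    (hN : ∀ u v : G, ⁅u, v⁆ ∈ N) {l₁ l₂ : List G} (h : l₁.Perm l₂) :
    l₁.prod ∈ N ↔ l₂.prod ∈ N := by
  have hcomm : ∀ u v : G ⧸ N, Commute u v := by
    intro u v
    obtain ⟨u, rfl⟩ := QuotientGroup.mk_surjective u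
    obtain ⟨v, rfl⟩ := QuotientGroup.mk_surjective v
    rw [← commutatorElement_eq_one_iff_commute]
    exact (QuotientGroup.eq_one_iff _).mpr (hN u v)
  simp only [← QuotientGroup.eq_one_iff, ← QuotientGroup.mk'_apply, map_list_prod]
  rw [(h.map _).prod_eq' (List.pairwise_of_forall hcomm)]

theorem commutatorElement_prod_drop_eq_mul (hc : ∀ u v : G, ⁅u, v⁆ ∈ center G) (x : G)
    (l : List G) {k j : ℕ} (hkj : k ≤ j) :
    ⁅x, (l.drop k).prod⁆ = ⁅x, ((l.drop k).take (j - k)).prod⁆ * ⁅x, (l.drop j).prod⁆ := by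
  rw [← commutatorElement_mul_right_of_mem_center (hc _ _), ← List.prod_append]
  conv_lhs => rw [← List.take_append_drop (j - k) (l.drop k), List.drop_drop,
    Nat.add_sub_cancel' hkj]

theorem exists_prod_take_cons_drop_eq_one [Finite G] (hc : ∀ u v : G, ⁅u, v⁆ ∈ center G)
    (l r : List G) (x : G) (hcard : Nat.card (center G) ≤ l.length + 1)
    (hnc : ∀ a b : ℕ, a ≤ b → b < l.length → ¬ Commute x (((l.drop a).take (b - a + 1)).prod))
    (hprod : (l ++ x :: r).prod ∈ center G) :
    ∃ k, (l.take k ++ x :: (l.drop k ++ r)).prod = 1 := by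
  let f : Fin (l.length + 1) → center G := fun k => ⟨⁅x, (l.drop k).prod⁆, hc _ _⟩
  have hf : Function.Injective f := by
    refine Function.Injective.of_lt_imp_ne fun k j hkj hkj' => ?_
    have hkj : (k : ℕ) < j := hkj
    have hj : (j : ℕ) ≤ l.length := Nat.lt_succ_iff.mp j.2
    apply hnc k (j - 1) (by omega) (by omega)
    rw [← commutatorElement_eq_one_iff_commute, show (j : ℕ) - 1 - k + 1 = j - k by omega]
    have heq : ⁅x, (l.drop k).prod⁆ = ⁅x, (l.drop j).prod⁆ := congrArg Subtype.val hkj'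
    rw [commutatorElement_prod_drop_eq_mul hc x l hkj.le] at heq
    simpa using heq
  obtain ⟨k, hk⟩ := (hf.bijective_of_nat_card_le (by simpa using hcard)).2 ⟨_, inv_mem hprod⟩
  refine ⟨k, ?_⟩
  rw [List.prod_append_cons_append_eq_commutatorElement_mul _ _ _ _ (hc _ _),
    List.take_append_drop]
  rw [show ⁅x, (l.drop k).prod⁆ = _ from congrArg Subtype.val hk, inv_mul_cancel]

end CommutatorsCentral

theorem exists_perm_ofFn_comp_eq_map {α : Type*} {m : ℕ} (g : Fin m → α) {L : List (Fin m)}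
    (hL : L.Perm (List.finRange m)) :
    ∃ σ : Equiv.Perm (Fin m), List.ofFn (g ∘ σ) = L.map g := by
  have hlen : L.length = m := by simpa using hL.length_eq
  let σ : Fin m ≃ Fin m := (finCongr hlen.symm).trans
    (List.Nodup.getEquivOfForallMemList L (hL.nodup_iff.mpr (List.nodup_finRange m))
      fun i => hL.mem_iff.mpr (List.mem_finRange i))
  refine ⟨σ, ?_⟩
  rw [← List.map_ofFn]
  congr 1
  apply List.ext_get (by simp [hlen])
  intro n _ _
  simp [σ]

theorem List.perm_take_cons_drop_append {α : Type*} (S R : List α) (e : α) (k : ℕ) :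
    (S.take k ++ e :: (S.drop k ++ R)).Perm (S ++ e :: R) := by
  refine List.perm_middle.trans ?_
  rw [← List.append_assoc, List.take_append_drop]
  exact List.perm_middle.symm

theorem exists_ofFn_append_perm_finRange {n m : ℕ} {ι : Fin n → Fin m}
    (hι : Function.Injective ι) : ∃ R, (List.ofFn ι ++ R).Perm (List.finRange m) := by
  obtain ⟨T, hT, hsub⟩ := (List.nodup_ofFn.mpr hι).subperm fun i _ => List.mem_finRange i
  obtain ⟨R, hR⟩ := hsub.exists_perm_append
  exact ⟨R, (hT.symm.append_right R).trans hR.symm⟩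

theorem stmt_7_general (p : ℕ) (hp : p.Prime)
    {G : Type*} [Group G] [Fintype G]
    (hcard : Fintype.card G = p ^ 3)
    (hna : ∃ a b : G, a * b ≠ b * a)
    (m : ℕ) (g : Fin m → G)
    (hcentral : (List.ofFn g).prod ∈ Subgroup.center G)
    (ι : Fin p → Fin m) (hι : Function.Injective ι)
    -- `h_p` does not commute with `h_α ⋯ h_β` for any `1 ≤ α ≤ β ≤ p - 1`,
    -- where `h_i = g (ι (i-1))` (indices of `Fin p` are `0`-based)
    (hnc : ∀ a b : ℕ, a ≤ b → b ≤ p - 2 →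
      ¬ Commute (g (ι ⟨p - 1, Nat.sub_lt hp.pos one_pos⟩))
        ((((List.ofFn (g ∘ ι)).drop a).take (b - a + 1)).prod)) :
    ∃ σ : Equiv.Perm (Fin m), (List.ofFn (g ∘ σ)).prod = 1 := by
  have := Fact.mk hp
  have hG : Nat.card G = p ^ 3 := by rw [Nat.card_eq_fintype_card, hcard]
  have hc := commutatorElement_mem_center_of_card_eq_prime_pow_three hG hna
  set e := ι ⟨p - 1, Nat.sub_lt hp.pos one_pos⟩
  set S := (List.ofFn ι).dropLast
  have hSlen : S.length = p - 1 := by simp [S]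
  have hT : List.ofFn ι = S ++ [e] := by
    have hne : List.ofFn ι ≠ [] := by simpa using hp.ne_zero
    rw [← List.dropLast_append_getLast hne, List.getLast_ofFn]
  obtain ⟨R, hR⟩ := exists_ofFn_append_perm_finRange hι
  rw [hT, List.append_assoc, List.singleton_append] at hR
  have hcard_le : Nat.card (center G) ≤ (S.map g).length + 1 := by
    rw [card_center_eq_prime_of_card_eq_prime_pow_three hG hna, List.length_map, hSlen]
    omega
  have hnc' : ∀ a b : ℕ, a ≤ b → b < (S.map g).length →
      ¬ Commute (g e) ((((S.map g).drop a).take (b - a + 1)).prod) := by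
    intro a b hab hb
    rw [List.length_map] at hb
    convert hnc a b hab (by omega) using 3
    rw [← List.map_ofFn, hT, List.map_append, List.drop_append_of_le_length (by simp; omega),
      List.take_append_of_le_length (by simp; omega)]
  have hprod : (S.map g ++ g e :: R.map g).prod ∈ center G := by
    rw [← List.map_cons, ← List.map_append]
    refine ((hR.map g).prod_mem_iff_of_commutatorElement_mem hc).mpr ?_
    rwa [← List.ofFn_eq_map]
  obtain ⟨k, hk⟩ := exists_prod_take_cons_drop_eq_one hc _ _ _ hcard_le hnc' hprod
  obtain ⟨σ, hσ⟩ :=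
    exists_perm_ofFn_comp_eq_map g ((S.perm_take_cons_drop_append R e k).trans hR)
  refine ⟨σ, ?_⟩
  simpa [hσ, List.map_take, List.map_drop] using hk

theorem stmt_7 (p : ℕ) (hp : p.Prime) (hodd : Odd p)
    {G : Type*} [Group G] [Fintype G]
    (hcard : Fintype.card G = p ^ 3)
    (hexp : Monoid.exponent G = p)
    (hna : ∃ a b : G, a * b ≠ b * a)
    (m : ℕ) (hm : p + 1 ≤ m) (g : Fin m → G)
    (hcentral : (List.ofFn g).prod ∈ Subgroup.center G)
    (ι : Fin p → Fin m) (hι : Function.Injective ι)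
    -- `h_p` does not commute with `h_α ⋯ h_β` for any `1 ≤ α ≤ β ≤ p - 1`,
    -- where `h_i = g (ι (i-1))` (indices of `Fin p` are `0`-based)
    (hnc : ∀ a b : ℕ, a ≤ b → b ≤ p - 2 →
      ¬ Commute (g (ι ⟨p - 1, Nat.sub_lt hp.pos one_pos⟩))
        ((((List.ofFn (g ∘ ι)).drop a).take (b - a + 1)).prod)) :
    ∃ σ : Equiv.Perm (Fin m), (List.ofFn (g ∘ σ)).prod = 1 :=
  stmt_7_general p hp hcard hna m g hcentral ι hι hnc
end

section
/- Let $p$ be an odd prime and $G$ the non-abelian group of order $p^3$ and exponent $p$. Let $S$ be a sequence of length $3p-2$ over $G$ with no central terms, such that at least $2p-2$ terms of $S$ lie in a single $z$-class (i.e., lie in $C_G(g) \setminus Z(G)$ for a fixed non-central $g$). Then $S$ has a nonempty product-one subsequence. -/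
/-!
Pick a noncentral `t` in the given `z`-class and some `r` not commuting with it. The commutator
`z = ⁅r⁻¹, t⁻¹⁆` is central of order `p`, and `(a, b, c) ↦ t ^ a * r ^ b * z ^ c` is an isomorphism
from the Heisenberg group over `ZMod p` onto `G` that carries `{b = 0}` onto `C_G(t)` and
`{a = b = 0}` onto the centre. In these coordinates everything becomes additive.

If at least `2p - 1` terms have `b = 0`, they live in the elementary abelian group `{b = 0}` of
rank two, whose Davenport constant `2p - 1` follows from Chevalley–Warning. Otherwise there are
`2p - 2` terms with `b = 0` (so `a ≠ 0`) and `p` terms with `b ≠ 0`. Among the latter, a nonempty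
`J` has `b`-sum zero. Subset sums of `p - 1` nonzero residues cover `ZMod p` (Cauchy–Davenport),
and this is used twice: to pick at least `p - 1` terms `L` with `b = 0` cancelling the `a`-sum of
`J`, and then to choose which part of `L` to move past the first term of `J`, which shifts the
central coordinate by an arbitrary amount.
-/

/-- A sequence (multiset) over `G` has a product-one subsequence if some nonempty
list of its terms (a sub-multiset) multiplies to the identity. -/
def HasProdOneSubseq {G : Type*} [Group G] (S : Multiset G) : Prop :=
  ∃ l : List G, l ≠ [] ∧ (l : Multiset G) ≤ S ∧ l.prod = 1

namespace HasProdOneSubseq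

variable {G H : Type*} [Group G] [Group H] {S T : Multiset G}

lemma mono (h : HasProdOneSubseq S) (hST : S ≤ T) : HasProdOneSubseq T :=
  let ⟨l, hl, hlS, hprod⟩ := h
  ⟨l, hl, hlS.trans hST, hprod⟩

lemma map {F : Type*} [FunLike F G H] [MonoidHomClass F G H] (h : HasProdOneSubseq S) (f : F) :
    HasProdOneSubseq (S.map f) :=
  let ⟨l, hl, hlS, hprod⟩ := h
  ⟨l.map f, by simpa using hl, by simpa using Multiset.map_le_map hlS,
    by simp [← map_list_prod, hprod]⟩

end HasProdOneSubseq

section SubsequenceSums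

open Finset Pointwise

variable {α : Type*} {p : ℕ} (f : α → ZMod p)

def subseqSums (M : Multiset α) : Finset (ZMod p) :=
  (M.powerset.map fun N => (N.map f).sum).toFinset

variable {f}

lemma mem_subseqSums {M : Multiset α} {τ : ZMod p} :
    τ ∈ subseqSums f M ↔ ∃ N ≤ M, (N.map f).sum = τ := by
  classical
  simp [subseqSums]

variable [Fact p.Prime]

lemma min_le_card_subseqSums {M : Multiset α} (hf : ∀ x ∈ M, f x ≠ 0) :
    min p (Multiset.card M + 1) ≤ #(subseqSums f M) := by
  induction M using Multiset.induction_on with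
  | empty =>
    have : subseqSums f 0 = {0} := by ext; simp [mem_subseqSums, eq_comm]
    simp [this]
  | cons x M ih =>
    have hfx : f x ≠ 0 := hf x (Multiset.mem_cons_self x M)
    have hsub : {0, f x} + subseqSums f M ⊆ subseqSums f (x ::ₘ M) := by
      simp only [subset_iff, mem_add, mem_insert, mem_singleton, mem_subseqSums]
      rintro _ ⟨_, rfl | rfl, _, ⟨N, hN, rfl⟩, rfl⟩
      · exact ⟨N, hN.trans (Multiset.le_cons_self M x), (zero_add _).symm⟩
      · exact ⟨x ::ₘ N, Multiset.cons_le_cons x hN, by simp⟩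
    calc min p (Multiset.card (x ::ₘ M) + 1)
        ≤ min p (#{0, f x} + #(subseqSums f M) - 1) := by
          rw [card_pair hfx.symm, Multiset.card_cons]
          have := ih fun y hy => hf y (Multiset.mem_cons_of_mem hy)
          omega
      _ ≤ #({0, f x} + subseqSums f M) :=
          ZMod.cauchy_davenport Fact.out (insert_nonempty _ _)
            ⟨0, mem_subseqSums.mpr ⟨0, Multiset.zero_le _, by simp⟩⟩
      _ ≤ #(subseqSums f (x ::ₘ M)) := card_le_card hsub

lemma exists_le_map_sum_eq {M : Multiset α} (hf : ∀ x ∈ M, f x ≠ 0)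
    (hM : p - 1 ≤ Multiset.card M) (τ : ZMod p) : ∃ N ≤ M, (N.map f).sum = τ := by
  have hp := (Fact.out : p.Prime).two_le
  have huniv : subseqSums f M = univ :=
    eq_univ_of_card _ (le_antisymm (card_le_univ _)
      (by have := min_le_card_subseqSums hf; rw [ZMod.card]; omega))
  exact mem_subseqSums.mp (huniv ▸ mem_univ τ)

lemma exists_le_ne_zero_map_sum_eq_zero {M : Multiset α} (hf : ∀ x ∈ M, f x ≠ 0)
    (hM : p ≤ Multiset.card M) : ∃ N ≤ M, N ≠ 0 ∧ (N.map f).sum = 0 := by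
  obtain ⟨x, hx⟩ := Multiset.card_pos_iff_exists_mem.mp ((Fact.out : p.Prime).pos.trans_le hM)
  obtain ⟨M', rfl⟩ := Multiset.exists_cons_of_mem hx
  obtain ⟨N, hN, hsum⟩ := exists_le_map_sum_eq (fun y hy => hf y (Multiset.mem_cons_of_mem hy))
    (by rw [Multiset.card_cons] at hM; omega) (-f x)
  exact ⟨x ::ₘ N, Multiset.cons_le_cons x hN, Multiset.cons_ne_zero, by simp [hsum]⟩

lemma exists_le_card_le_map_sum_eq {M : Multiset α} (hf : ∀ x ∈ M, f x ≠ 0)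
    (hM : 2 * (p - 1) ≤ Multiset.card M) (τ : ZMod p) :
    ∃ N ≤ M, p - 1 ≤ Multiset.card N ∧ (N.map f).sum = τ := by
  classical
  obtain ⟨M₁, hM₁⟩ : ∃ M₁, M₁ ∈ M.powersetCard (p - 1) := Multiset.card_pos_iff_exists_mem.mp
    (by rw [Multiset.card_powersetCard]; exact Nat.choose_pos (by omega))
  rw [Multiset.mem_powersetCard] at hM₁
  obtain ⟨N₁, hN₁, hsum⟩ := exists_le_map_sum_eq (fun y hy => hf y (Multiset.mem_of_le hM₁.1 hy))
    hM₁.2.ge (τ - ((M - M₁).map f).sum)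
  refine ⟨N₁ + (M - M₁), ?_, ?_, by simp [hsum]⟩
  · exact (add_le_add hN₁ le_rfl).trans_eq (add_tsub_cancel_of_le hM₁.1)
  · rw [Multiset.card_add, Multiset.card_sub hM₁.1, hM₁.2]
    omega

open MvPolynomial in
lemma exists_le_ne_zero_map_sum_eq_zero_and_map_sum_eq_zero (f g : α → ZMod p)
    {M : Multiset α} (hM : 2 * p - 1 ≤ Multiset.card M) :
    ∃ N ≤ M, N ≠ 0 ∧ (N.map f).sum = 0 ∧ (N.map g).sum = 0 := by
  classical
  have hp := (Fact.out : p.Prime).two_le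
  set l := M.toList
  let F (h : α → ZMod p) : MvPolynomial (Fin l.length) (ZMod p) := ∑ i, h l[i] • X i ^ (p - 1)
  have hdeg (h : α → ZMod p) : (F h).totalDegree ≤ p - 1 :=
    totalDegree_finsetSum_le fun i _ => (totalDegree_smul_le _ _).trans (totalDegree_X_pow _ _).le
  have heval (h : α → ZMod p) (x : Fin l.length → ZMod p) :
      eval x (F h) = ∑ i ∈ univ.filter (x · ≠ 0), h l[i] := by
    simp [F, ZMod.pow_card_sub_one, Finset.sum_filter]
  -- Chevalley–Warning yields a nonzero common zero `x`; its support is the subsequence.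
  have hdvd := char_dvd_card_solutions_of_add_lt p (f₁ := F f) (f₂ := F g)
    (by
      have := hdeg f; have := hdeg g
      simp only [Fintype.card_fin, l, Multiset.length_toList]
      omega)
  let zero : {x : Fin l.length → ZMod p // eval x (F f) = 0 ∧ eval x (F g) = 0} :=
    ⟨0, by simp only [heval]; simp⟩
  obtain ⟨⟨x, hxf, hxg⟩, hx⟩ := Fintype.exists_ne_of_one_lt_card
    ((Fact.out : p.Prime).one_lt.trans_le
      (Nat.le_of_dvd (Fintype.card_pos_iff.mpr ⟨zero⟩) hdvd)) zero
  refine ⟨(univ.filter (x · ≠ 0)).val.map l.get, ?_, ?_, ?_, ?_⟩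
  · calc _ ≤ univ.val.map l.get := Multiset.map_le_map (Multiset.filter_le _ _)
      _ = M := by rw [Fin.univ_val_map, List.ofFn_get, Multiset.coe_toList]
  · obtain ⟨i, hi⟩ : ∃ i, x i ≠ 0 := Function.ne_iff.mp fun h => hx (Subtype.ext h)
    have hi' : i ∈ (univ.filter (x · ≠ 0)).val := by simpa using hi
    exact ne_of_mem_of_not_mem' (Multiset.mem_map_of_mem l.get hi') (Multiset.notMem_zero _)
  · rw [Multiset.map_map]; exact (heval f x).symm.trans hxf
  · rw [Multiset.map_map]; exact (heval g x).symm.trans hxg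

end SubsequenceSums

-- `⟨a, b, c⟩` is the unitriangular matrix `!![1, b, c; 0, 1, a; 0, 0, 1]`.
@[ext]
structure Heisenberg (R : Type*) where
  a : R
  b : R
  c : R

namespace Heisenberg

variable {R : Type*}

def equivProd : Heisenberg R ≃ R × R × R where
  toFun x := (x.a, x.b, x.c)
  invFun x := ⟨x.1, x.2.1, x.2.2⟩

instance [Finite R] : Finite (Heisenberg R) := Finite.of_equiv _ equivProd.symm

lemma card : Nat.card (Heisenberg R) = Nat.card R ^ 3 := by
  rw [Nat.card_congr equivProd, Nat.card_prod, Nat.card_prod]; ring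

variable [CommRing R]

instance : Mul (Heisenberg R) := ⟨fun x y => ⟨x.a + y.a, x.b + y.b, x.c + y.c + x.b * y.a⟩⟩
instance : One (Heisenberg R) := ⟨⟨0, 0, 0⟩⟩
instance : Inv (Heisenberg R) := ⟨fun x => ⟨-x.a, -x.b, -x.c + x.b * x.a⟩⟩

@[simp] lemma mul_a (x y : Heisenberg R) : (x * y).a = x.a + y.a := rfl
@[simp] lemma mul_b (x y : Heisenberg R) : (x * y).b = x.b + y.b := rfl
@[simp] lemma mul_c (x y : Heisenberg R) : (x * y).c = x.c + y.c + x.b * y.a := rfl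
@[simp] lemma one_a : (1 : Heisenberg R).a = 0 := rfl
@[simp] lemma one_b : (1 : Heisenberg R).b = 0 := rfl
@[simp] lemma one_c : (1 : Heisenberg R).c = 0 := rfl
@[simp] lemma inv_a (x : Heisenberg R) : x⁻¹.a = -x.a := rfl
@[simp] lemma inv_b (x : Heisenberg R) : x⁻¹.b = -x.b := rfl
@[simp] lemma inv_c (x : Heisenberg R) : x⁻¹.c = -x.c + x.b * x.a := rfl

instance : Group (Heisenberg R) where
  mul_assoc x y z := by ext <;> simp <;> ring
  one_mul x := by ext <;> simp
  mul_one x := by ext <;> simp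
  inv_mul_cancel x := by ext <;> simp

lemma commute_iff {x y : Heisenberg R} : Commute x y ↔ x.b * y.a = y.b * x.a := by
  simp only [Commute, SemiconjBy, Heisenberg.ext_iff, mul_a, mul_b, mul_c, add_comm x.a,
    add_comm x.b, true_and]
  constructor <;> intro h <;> linear_combination h

lemma mul_eq_mul_mul (x y : Heisenberg R) : x * y = y * x * ⟨0, 0, x.b * y.a - y.b * x.a⟩ := by
  ext <;> simp <;> ring

lemma list_prod_a (l : List (Heisenberg R)) : l.prod.a = (l.map a).sum := by
  induction l <;> simp [*]

lemma list_prod_b (l : List (Heisenberg R)) : l.prod.b = (l.map b).sum := by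
  induction l <;> simp [*]

lemma list_prod_of_b_eq_zero {l : List (Heisenberg R)} (hl : ∀ x ∈ l, x.b = 0) :
    l.prod = ⟨(l.map a).sum, 0, (l.map c).sum⟩ := by
  induction l with
  | nil => rfl
  | cons x l ih =>
    simp only [List.mem_cons, forall_eq_or_imp] at hl
    ext <;> simp [ih hl.2, hl.1]

lemma prod_toList_of_b_eq_zero {N : Multiset (Heisenberg R)} (hN : ∀ x ∈ N, x.b = 0) :
    N.toList.prod = ⟨(N.map a).sum, 0, (N.map c).sum⟩ := by
  conv_rhs => rw [← N.coe_toList]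
  exact list_prod_of_b_eq_zero (by simpa using hN)

end Heisenberg

section ZModPow

variable {G : Type*} [Group G] {p : ℕ} {x : G}

lemma pow_zmod_val_mul (hx : x ^ p = 1) (a b : ZMod p) :
    x ^ (a * b).val = x ^ (a.val * b.val) := by
  rw [ZMod.val_mul, ← pow_eq_pow_mod _ hx]

variable [NeZero p]

lemma pow_zmod_val_add (hx : x ^ p = 1) (a b : ZMod p) :
    x ^ (a + b).val = x ^ a.val * x ^ b.val := by
  rw [ZMod.val_add, ← pow_eq_pow_mod _ hx, pow_add]

lemma pow_zmod_val_eq_one_iff (hx : orderOf x = p) (a : ZMod p) : x ^ a.val = 1 ↔ a = 0 := by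
  rw [← orderOf_dvd_iff_pow_eq_one, hx, ← ZMod.natCast_eq_zero_iff, ZMod.natCast_zmod_val]

end ZModPow

lemma pow_mul_pow_of_mul_eq_mul_mul {G : Type*} [Group G] {t r z : G} (hz : z ∈ Subgroup.center G)
    (hrt : r * t = t * r * z) (m n : ℕ) : r ^ n * t ^ m = t ^ m * r ^ n * z ^ (m * n) := by
  have hzg : ∀ (k : ℕ) (g : G), z ^ k * g = g * z ^ k := fun k g =>
    Subgroup.mem_center_iff.mp (Subgroup.pow_mem _ hz k) g |>.symm
  have hr : ∀ m : ℕ, r * t ^ m = t ^ m * r * z ^ m := by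
    intro m
    induction m with
    | zero => simp
    | succ m ih =>
      calc r * t ^ (m + 1) = t ^ m * r * (z ^ m * t) := by rw [pow_succ, ← mul_assoc, ih]; group
        _ = t ^ m * (r * t) * z ^ m := by rw [hzg]; group
        _ = t ^ (m + 1) * r * z ^ (m + 1) := by rw [hrt]; group
  induction n with
  | zero => simp
  | succ n ih =>
    calc r ^ (n + 1) * t ^ m = r ^ n * t ^ m * r * z ^ m := by rw [pow_succ, mul_assoc, hr]; group
      _ = t ^ m * r ^ n * (z ^ (m * n) * r) * z ^ m := by rw [ih]; group
      _ = t ^ m * r ^ (n + 1) * z ^ (m * (n + 1)) := by rw [hzg]; group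

namespace Heisenberg

variable {G : Type*} [Group G] {p : ℕ} [Fact p.Prime] {t r z : G}

def lift (ht : t ^ p = 1) (hr : r ^ p = 1) (hz : z ^ p = 1) (hzc : z ∈ Subgroup.center G)
    (hrt : r * t = t * r * z) : Heisenberg (ZMod p) →* G where
  toFun x := t ^ x.a.val * r ^ x.b.val * z ^ x.c.val
  map_one' := by simp
  map_mul' := by
    rintro ⟨a, b, c⟩ ⟨a', b', c'⟩
    have hzg : ∀ (k : ℕ) (g : G), z ^ k * g = g * z ^ k := fun k g =>
      Subgroup.mem_center_iff.mp (Subgroup.pow_mem _ hzc k) g |>.symm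
    simp only [mul_a, mul_b, mul_c, pow_zmod_val_add ht, pow_zmod_val_add hr,
      pow_zmod_val_add hz, pow_zmod_val_mul hz]
    symm
    calc _ = t ^ a.val * r ^ b.val * (z ^ c.val * (t ^ a'.val * r ^ b'.val * z ^ c'.val)) := by
          group
      _ = t ^ a.val * (r ^ b.val * t ^ a'.val) * r ^ b'.val * z ^ c.val * z ^ c'.val := by
          rw [hzg]; group
      _ = t ^ a.val * t ^ a'.val * r ^ b.val * (z ^ (a'.val * b.val) * r ^ b'.val)
          * z ^ c.val * z ^ c'.val := by
          rw [pow_mul_pow_of_mul_eq_mul_mul hzc hrt]; group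
      _ = _ := by rw [hzg]; group

variable (ht : t ^ p = 1) (hr : r ^ p = 1) (hz : z ^ p = 1) (hzc : z ∈ Subgroup.center G)
  (hrt : r * t = t * r * z)

@[simp] lemma lift_apply (x : Heisenberg (ZMod p)) :
    lift ht hr hz hzc hrt x = t ^ x.a.val * r ^ x.b.val * z ^ x.c.val := rfl

lemma lift_one_zero_zero : lift ht hr hz hzc hrt ⟨1, 0, 0⟩ = t := by
  simp [ZMod.val_one]

lemma lift_zero_zero (c : ZMod p) : lift ht hr hz hzc hrt ⟨0, 0, c⟩ = z ^ c.val := by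
  simp

lemma commute_of_commute_lift (hz1 : z ≠ 1) {x y : Heisenberg (ZMod p)}
    (h : Commute (lift ht hr hz hzc hrt x) (lift ht hr hz hzc hrt y)) : Commute x y := by
  have hcomm := congrArg (lift ht hr hz hzc hrt) (mul_eq_mul_mul x y)
  rw [map_mul, map_mul, map_mul, h.eq, left_eq_mul, lift_zero_zero,
    pow_zmod_val_eq_one_iff (orderOf_eq_prime hz hz1), sub_eq_zero] at hcomm
  exact commute_iff.mpr hcomm

lemma lift_injective (hz1 : z ≠ 1) : Function.Injective (lift ht hr hz hzc hrt) := by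
  refine (injective_iff_map_eq_one _).mpr fun x hx => ?_
  have hcomm : ∀ y, Commute x y := fun y =>
    commute_of_commute_lift ht hr hz hzc hrt hz1 (by rw [hx]; exact Commute.one_left _)
  have hb : x.b = 0 := by simpa using commute_iff.mp (hcomm ⟨1, 0, 0⟩)
  have ha : x.a = 0 := by simpa using (commute_iff.mp (hcomm ⟨0, 1, 0⟩)).symm
  have hx0 : x = ⟨0, 0, x.c⟩ := by ext <;> simp [ha, hb]
  rw [hx0, lift_zero_zero, pow_zmod_val_eq_one_iff (orderOf_eq_prime hz hz1)] at hx
  rw [hx0, hx]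
  rfl

end Heisenberg

section OrderPCube

open Subgroup
open scoped commutatorElement

variable {G : Type*} [Group G] {p : ℕ} [Fact p.Prime]

lemma card_center_eq_prime (hG : Nat.card G = p ^ 3) (hZ : center G ≠ ⊤) :
    Nat.card (center G) = p := by
  have : Finite G := Nat.finite_of_card_ne_zero (by simp [hG, (Fact.out : p.Prime).ne_zero])
  obtain ⟨k, hk0, hk⟩ := IsPGroup.card_center_eq_prime_pow hG (by norm_num)
  have hk3 : k ≤ 3 := by
    have := card_subgroup_dvd_card (center G)
    rw [hk, hG] at this
    exact (Nat.pow_dvd_pow_iff_le_right (Fact.out : p.Prime).one_lt).mp this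
  obtain rfl | hk2 : k = 1 ∨ 2 ≤ k := by omega
  · simpa using hk
  have : IsCyclic (G ⧸ center G) := by
    refine isCyclic_of_card_dvd_prime (p := p) (Nat.dvd_of_mul_dvd_mul_right
      (pow_pos (Fact.out : p.Prime).pos k) ?_)
    rw [← hk, ← card_eq_card_quotient_mul_card_subgroup, hG, hk, ← pow_succ']
    exact pow_dvd_pow p (by omega)
  exact absurd (center_eq_top_iff.mpr (isMulCommutative_of_isCyclic_quotient_center_self G)) hZ

lemma commutatorElement_mem_center (hG : Nat.card G = p ^ 3) (hZ : center G ≠ ⊤) (x y : G) :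
    ⁅x, y⁆ ∈ center G := by
  have hQ : Nat.card (G ⧸ center G) = p ^ 2 := by
    have := card_eq_card_quotient_mul_card_subgroup (center G)
    rw [hG, card_center_eq_prime hG hZ, pow_succ] at this
    exact (Nat.eq_of_mul_eq_mul_right (Fact.out : p.Prime).pos this).symm
  have := IsPGroup.isMulCommutative_of_card_eq_prime_sq hQ
  rw [← QuotientGroup.eq_one_iff]
  change QuotientGroup.mk' (center G) ⁅x, y⁆ = 1
  rw [map_commutatorElement, commutatorElement_eq_one_iff_mul_comm]
  exact this.is_comm.comm _ _

lemma card_centralizer_eq_prime_sq [Finite G] (hG : Nat.card G = p ^ 3) {g : G}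
    (hg : g ∉ center G) : Nat.card (centralizer {g}) = p ^ 2 := by
  have hZ : center G ≠ ⊤ := fun h => hg (h ▸ mem_top g)
  obtain ⟨k, hk3, hk⟩ :=
    (Nat.dvd_prime_pow Fact.out).mp (hG ▸ card_subgroup_dvd_card (centralizer {g}))
  obtain hk1 | rfl | rfl : k ≤ 1 ∨ k = 2 ∨ k = 3 := by omega
  · have : center G = centralizer {g} := eq_of_le_of_card_ge (center_le_centralizer {g}) (by
      rw [hk, card_center_eq_prime hG hZ]
      exact (pow_le_pow_right₀ (Fact.out : p.Prime).one_lt.le hk1).trans (pow_one p).le)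
    exact absurd (this ▸ mem_centralizer_singleton_iff.mpr rfl) hg
  · exact hk
  · have := centralizer_eq_top_iff_subset.mp (eq_top_of_card_eq _ (hk.trans hG.symm))
    exact absurd (this rfl) hg

lemma commute_of_mem_centralizer [Finite G] (hG : Nat.card G = p ^ 3) {g x y : G}
    (hg : g ∉ center G) (hx : x ∈ centralizer {g}) (hy : y ∈ centralizer {g}) : Commute x y := by
  have := IsPGroup.isMulCommutative_of_card_eq_prime_sq (card_centralizer_eq_prime_sq hG hg)
  exact congrArg Subtype.val (this.is_comm.comm ⟨x, hx⟩ ⟨y, hy⟩)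

theorem exists_mulEquiv_heisenberg [Finite G] (hG : Nat.card G = p ^ 3)
    (hexp : ∀ x : G, x ^ p = 1) {t : G} (ht : t ∉ center G) :
    ∃ e : Heisenberg (ZMod p) ≃* G, e ⟨1, 0, 0⟩ = t ∧ ∀ c, e ⟨0, 0, c⟩ ∈ center G := by
  have hZ : center G ≠ ⊤ := fun h => ht (h ▸ mem_top t)
  obtain ⟨r, hr⟩ : ∃ r, r * t ≠ t * r := by simpa [mem_center_iff] using ht
  set z := ⁅r⁻¹, t⁻¹⁆
  have hrt : r * t = t * r * z := by simp only [z, commutatorElement_def]; group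
  have hz1 : z ≠ 1 := fun h => hr (by rw [hrt, h, mul_one])
  have hzc := commutatorElement_mem_center hG hZ r⁻¹ t⁻¹
  let ψ := Heisenberg.lift (hexp t) (hexp r) (hexp z) hzc hrt
  have hψ : Function.Bijective ψ := (Nat.bijective_iff_injective_and_card ψ).mpr
    ⟨Heisenberg.lift_injective _ _ _ _ _ hz1, by rw [Heisenberg.card, hG, Nat.card_zmod]⟩
  refine ⟨MulEquiv.ofBijective ψ hψ,
    Heisenberg.lift_one_zero_zero (hexp t) (hexp r) (hexp z) hzc hrt, fun c => ?_⟩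
  simpa [ψ] using pow_mem hzc c.val

end OrderPCube

namespace Heisenberg

variable {p : ℕ} [Fact p.Prime]

lemma hasProdOneSubseq_of_b_eq_zero {M : Multiset (Heisenberg (ZMod p))}
    (hb : ∀ x ∈ M, x.b = 0) (hM : 2 * p - 1 ≤ Multiset.card M) : HasProdOneSubseq M := by
  obtain ⟨N, hN, hN0, ha, hc⟩ := exists_le_ne_zero_map_sum_eq_zero_and_map_sum_eq_zero a c hM
  refine ⟨N.toList, by simpa using hN0, by simpa using hN, ?_⟩
  rw [prod_toList_of_b_eq_zero fun x hx => hb x (Multiset.mem_of_le hN hx), ha, hc]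
  rfl

lemma exists_prod_mul_mul_prod_eq {L : Multiset (Heisenberg (ZMod p))} (hb : ∀ x ∈ L, x.b = 0)
    (ha : ∀ x ∈ L, x.a ≠ 0) (hL : p - 1 ≤ Multiset.card L) {j y : Heisenberg (ZMod p)}
    (hj : j.b ≠ 0) (hya : y.a = (L.map a).sum + j.a) (hyb : y.b = j.b) :
    ∃ I₀ I₁ : List (Heisenberg (ZMod p)), ((I₀ ++ I₁ : List _) : Multiset _) = L ∧
      I₀.prod * j * I₁.prod = y := by
  classical
  -- Moving the part `N` of `L` past `j` adds `j.b * (N.map a).sum` to the central coordinate.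
  obtain ⟨N, hN, hNa⟩ := exists_le_map_sum_eq ha hL ((y.c - (L.map c).sum - j.c) / j.b)
  have hsplit : L - N + N = L := tsub_add_cancel_of_le hN
  refine ⟨(L - N).toList, N.toList, by
    rw [← Multiset.coe_add, Multiset.coe_toList, Multiset.coe_toList, hsplit], ?_⟩
  rw [prod_toList_of_b_eq_zero fun x hx => hb x (Multiset.mem_of_le tsub_le_self hx),
    prod_toList_of_b_eq_zero fun x hx => hb x (Multiset.mem_of_le hN hx)]
  have hsum (f : Heisenberg (ZMod p) → ZMod p) :
      ((L - N).map f).sum + (N.map f).sum = (L.map f).sum := by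
    rw [← Multiset.sum_add, ← Multiset.map_add, hsplit]
  ext
  · simp only [mul_a]
    linear_combination hsum a - hya
  · simp [hyb]
  · simp only [mul_b, mul_c, hNa]
    field_simp
    linear_combination j.b * hsum c

lemma hasProdOneSubseq_add {M₀ M₁ : Multiset (Heisenberg (ZMod p))}
    (hb₀ : ∀ x ∈ M₀, x.b = 0) (ha₀ : ∀ x ∈ M₀, x.a ≠ 0) (h₀ : 2 * (p - 1) ≤ Multiset.card M₀)
    (hb₁ : ∀ x ∈ M₁, x.b ≠ 0) (h₁ : p ≤ Multiset.card M₁) : HasProdOneSubseq (M₀ + M₁) := by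
  obtain ⟨J, hJ, hJ0, hJb⟩ := exists_le_ne_zero_map_sum_eq_zero hb₁ h₁
  obtain ⟨L, hL, hLcard, hLa⟩ := exists_le_card_le_map_sum_eq ha₀ h₀ (-(J.map a).sum)
  obtain ⟨j, hj⟩ := Multiset.exists_mem_of_ne_zero hJ0
  obtain ⟨J', rfl⟩ := Multiset.exists_cons_of_mem hj
  obtain ⟨I₀, I₁, hI, hprod⟩ := exists_prod_mul_mul_prod_eq
    (fun x hx => hb₀ x (Multiset.mem_of_le hL hx)) (fun x hx => ha₀ x (Multiset.mem_of_le hL hx))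
    hLcard (hb₁ j (Multiset.mem_of_le hJ hj)) (y := J'.toList.prod⁻¹)
    (by simp [list_prod_a, hLa])
    (by
      rw [Multiset.map_cons, Multiset.sum_cons] at hJb
      simp only [inv_b, list_prod_b, Multiset.sum_map_toList]
      linear_combination -hJb)
  refine ⟨I₀ ++ j :: I₁ ++ J'.toList, by simp, ?_, ?_⟩
  · calc ((I₀ ++ j :: I₁ ++ J'.toList : List _) : Multiset _) = L + j ::ₘ J' := by
          conv_rhs => rw [← hI, ← J'.coe_toList, Multiset.cons_coe, Multiset.coe_add]
          rw [Multiset.coe_eq_coe, List.append_assoc, List.append_assoc, List.cons_append]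
          exact List.perm_middle.symm.append_left I₀
      _ ≤ M₀ + M₁ := add_le_add hL hJ
  · simp only [List.prod_append, List.prod_cons, ← mul_assoc, hprod, inv_mul_cancel]

theorem hasProdOneSubseq_of_card {M : Multiset (Heisenberg (ZMod p))}
    (hM : 3 * p - 2 ≤ Multiset.card M) (hZ : ∀ x ∈ M, x.a ≠ 0 ∨ x.b ≠ 0)
    (hC : 2 * p - 2 ≤ Multiset.card (M.filter (·.b = 0))) : HasProdOneSubseq M := by
  have hcard := Multiset.card_add (M.filter (·.b = 0)) (M.filter (¬·.b = 0))
  rw [Multiset.filter_add_not] at hcard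
  rw [← Multiset.filter_add_not (·.b = 0) M]
  have hb₀ : ∀ x ∈ M.filter (·.b = 0), x.b = 0 := fun x hx => (Multiset.mem_filter.mp hx).2
  by_cases h : 2 * p - 1 ≤ Multiset.card (M.filter (·.b = 0))
  · exact (hasProdOneSubseq_of_b_eq_zero hb₀ h).mono (Multiset.le_add_right _ _)
  · refine hasProdOneSubseq_add hb₀ (fun x hx => ?_) (by omega)
      (fun x hx => (Multiset.mem_filter.mp hx).2) (by omega)
    obtain ⟨hxM, hxb⟩ := Multiset.mem_filter.mp hx
    exact (hZ x hxM).resolve_right (not_not.mpr hxb)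

end Heisenberg

theorem stmt_10_general (p : ℕ) (hp : p.Prime)
    {G : Type*} [Group G] [Fintype G]
    (hcard : Fintype.card G = p ^ 3)
    (hexp : Monoid.exponent G = p)
    (S : Multiset G) (hlen : Multiset.card S = 3 * p - 2)
    (hnocen : ∀ s ∈ S, s ∉ Subgroup.center G)
    (g : G) (hg : g ∉ Subgroup.center G)
    (hclass : ∃ T : Multiset G, T ≤ S ∧ 2 * p - 2 ≤ Multiset.card T ∧
      ∀ t ∈ T, t ∈ (Subgroup.centralizer {g} : Set G) \ (Subgroup.center G : Set G)) :
    HasProdOneSubseq S := by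
  have := Fact.mk hp
  have hG : Nat.card G = p ^ 3 := by rw [Nat.card_eq_fintype_card, hcard]
  obtain ⟨T, hTS, hTcard, hT⟩ := hclass
  obtain ⟨t, ht⟩ : ∃ t, t ∈ T :=
    Multiset.card_pos_iff_exists_mem.mp (by have := hp.two_le; omega)
  obtain ⟨e, het, hez⟩ := exists_mulEquiv_heisenberg hG
    (fun x => hexp ▸ Monoid.pow_exponent_eq_one x) (hT t ht).2
  have hZ : ∀ x ∈ S.map e.symm, x.a ≠ 0 ∨ x.b ≠ 0 := by
    rintro x hx
    obtain ⟨s, hs, rfl⟩ := Multiset.mem_map.mp hx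
    by_contra! h
    have hs0 : (⟨0, 0, (e.symm s).c⟩ : Heisenberg (ZMod p)) = e.symm s := by ext <;> simp [h]
    exact hnocen s hs (by simpa [hs0] using hez (e.symm s).c)
  have hC : T.map e.symm ≤ (S.map e.symm).filter (·.b = 0) := by
    refine Multiset.le_filter.mpr ⟨Multiset.map_le_map hTS, fun x hx => ?_⟩
    obtain ⟨s, hs, rfl⟩ := Multiset.mem_map.mp hx
    have hst := (commute_of_mem_centralizer hG hg (hT s hs).1 (hT t ht).1).map e.symm
    rw [← het, MulEquiv.symm_apply_apply, Heisenberg.commute_iff] at hst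
    simpa using hst
  have key := Heisenberg.hasProdOneSubseq_of_card (by simp [hlen]) hZ
    ((Multiset.card_map _ _).symm.trans_le (Multiset.card_le_card hC) |>.trans' hTcard)
  simpa [Multiset.map_map] using key.map e

theorem stmt_10 (p : ℕ) (hp : p.Prime) (hodd : Odd p)
    {G : Type*} [Group G] [Fintype G]
    (hcard : Fintype.card G = p ^ 3)
    (hexp : Monoid.exponent G = p)
    (hna : ∃ a b : G, a * b ≠ b * a)
    (S : Multiset G) (hlen : Multiset.card S = 3 * p - 2)
    (hnocen : ∀ s ∈ S, s ∉ Subgroup.center G)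
    (g : G) (hg : g ∉ Subgroup.center G)
    (hclass : ∃ T : Multiset G, T ≤ S ∧ 2 * p - 2 ≤ Multiset.card T ∧
      ∀ t ∈ T, t ∈ (Subgroup.centralizer {g} : Set G) \ (Subgroup.center G : Set G)) :
    HasProdOneSubseq S :=
  stmt_10_general p hp hcard hexp S hlen hnocen g hg hclass
end

section
/- Let $G$ be the non-abelian group of order $27$ and exponent $3$. There exists a sequence of length $6$ over $G$ with no nonempty product-one subsequence; hence $\mathsf{d}(G) \ge 6$. -/
/-- The small Davenport constant: the maximal length of a sequence over `G`
with no nonempty product-one subsequence. -/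
noncomputable def smallDavenport (G : Type*) [Group G] : ℕ :=
  sSup {n | ∃ S : Multiset G, Multiset.card S = n ∧ ¬ HasProdOneSubseq S}



open Subgroup in
lemma center_quot_comm {G : Type*} [Group G] [Fintype G]
    (hcard : Fintype.card G = 27)
    (hna : ∃ a b : G, a * b ≠ b * a) :
    ∀ x y : G ⧸ Subgroup.center G, x * y = y * x := by
  obtain ⟨a, b, hab⟩ := hna
  haveI : Fact (Nat.Prime 3) := ⟨by norm_num⟩
  have hncard : Nat.card G = 3 ^ 3 := by simp [Nat.card_eq_fintype_card, hcard]
  have hpG : IsPGroup 3 G := IsPGroup.of_card hncard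
  obtain ⟨k, hk0, hkZ⟩ := IsPGroup.card_center_eq_prime_pow hncard (by norm_num)
  have hmul : Nat.card G = Nat.card (G ⧸ center G) * Nat.card (center G) :=
    Subgroup.card_eq_card_quotient_mul_card_subgroup (center G)
  have hk3 : k ≤ 3 := by
    by_contra h
    have : 3 ^ 4 ≤ 3 ^ k := Nat.pow_le_pow_right (by norm_num) (by omega)
    have : Nat.card (center G) ≤ Nat.card G := by
      have := Subgroup.card_subgroup_dvd_card (Subgroup.center G)
      exact Nat.le_of_dvd (by rw [hncard]; norm_num) this
    omega
  interval_cases k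
  · -- k = 1, quotient has card 9
    have hq : Nat.card (G ⧸ center G) = 3 ^ 2 := by
      rw [hncard, hkZ] at hmul; norm_num at hmul ⊢; omega
    exact IsPGroup.commutative_of_card_eq_prime_sq hq
  · -- k = 2, quotient cyclic of order 3
    exfalso
    have hq : Nat.card (G ⧸ center G) = 3 := by
      rw [hncard, hkZ] at hmul; norm_num at hmul ⊢; omega
    haveI : IsCyclic (G ⧸ center G) := isCyclic_of_prime_card hq
    exact hab (commutative_of_cyclic_center_quotient (QuotientGroup.mk' (center G))
      (le_of_eq (QuotientGroup.ker_mk' _)) a b)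
  · -- k = 3, center is everything
    exfalso
    have : center G = ⊤ := by
      apply Subgroup.eq_top_of_card_eq
      rw [hkZ, hncard]
    exact hab ((Subgroup.mem_center_iff.1 (this ▸ Subgroup.mem_top a)) b).symm


lemma hasProdOne_of_long {G : Type*} [Group G] [Fintype G] (S : Multiset G)
    (h : Fintype.card G ≤ Multiset.card S) : HasProdOneSubseq S := by
  classical
  set l := S.toList with hl
  have hlen : l.length = Multiset.card S := Multiset.length_toList S
  have hS : (l : Multiset G) = S := S.coe_toList
  set f : Fin (l.length + 1) → G := fun i => (l.take i).prod with hf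
  have hclt : Fintype.card G < Fintype.card (Fin (l.length + 1)) := by
    simp only [Fintype.card_fin]; omega
  obtain ⟨i, j, hne, hij⟩ := Fintype.exists_ne_map_eq_of_card_lt f hclt
  suffices key : ∀ i j : Fin (l.length + 1), i < j → f i = f j → HasProdOneSubseq S by
    rcases hne.lt_or_gt with h | h
    exacts [key _ _ h hij, key _ _ h hij.symm]
  intro i j hlt hfij
  have hjle : (j : ℕ) ≤ l.length := Nat.lt_succ_iff.mp j.isLt
  have hltn : (i : ℕ) < (j : ℕ) := hlt
  refine ⟨(l.drop i).take ((j : ℕ) - i), ?_, ?_, ?_⟩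
  · intro hnil
    have h0 : ((l.drop i).take ((j : ℕ) - i)).length = min ((j:ℕ) - i) (l.length - i) := by
      simp [List.length_take, List.length_drop]
    rw [hnil] at h0
    simp only [List.length_nil] at h0
    omega
  · rw [← hS]
    exact (Multiset.coe_le).2 (((l.drop i).take_sublist _).trans (l.drop_sublist _)).subperm
  · have h1 : l.take j = l.take i ++ (l.drop i).take ((j : ℕ) - i) := by
      rw [← List.take_add]
      congr 1
      omega
    have h2 : (l.take (i : ℕ)).prod = (l.take (j : ℕ)).prod := hfij
    rw [h1, List.prod_append] at h2
    exact (mul_left_cancel (a := (l.take (i:ℕ)).prod) (by rw [mul_one, ← h2]))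
lemma no_subseq_main {G : Type*} [Group G]
    (hcomm : ∀ x y : G ⧸ Subgroup.center G, x * y = y * x)
    (hpow : ∀ g : G, g ^ 3 = 1)
    (a b : G) (hab : a * b ≠ b * a) :
    ¬ HasProdOneSubseq ({a, a, b, b, a*b*a⁻¹*b⁻¹, a*b*a⁻¹*b⁻¹} : Multiset G) := by
  classical
  set c := a*b*a⁻¹*b⁻¹ with hc
  set Z := Subgroup.center G with hZ
  letI : CommGroup (G ⧸ Z) := { (inferInstance : Group (G ⧸ Z)) with mul_comm := hcomm }
  set φ : G →* G ⧸ Z := QuotientGroup.mk' Z with hφ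
  have hker : ∀ g : G, φ g = 1 ↔ g ∈ Z := by
    intro g
    rw [show φ = QuotientGroup.mk' Z from rfl, ← MonoidHom.mem_ker, QuotientGroup.ker_mk']
  have hcZ : c ∈ Z := by
    rw [← hker]
    have h1 : φ c = φ a * φ b * (φ a)⁻¹ * (φ b)⁻¹ := by
      simp [hc, map_mul, map_inv]
    rw [h1, mul_comm (φ a) (φ b)]
    group
  have hc1 : c ≠ 1 := by
    intro h
    apply hab
    have h1 : a * b = c * (b * a) := by rw [hc]; group
    rw [h, one_mul] at h1
    exact h1
  have haZ : a ∉ Z := fun h => hab ((Subgroup.mem_center_iff.1 h) b).symm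
  have hbZ : b ∉ Z := fun h => hab ((Subgroup.mem_center_iff.1 h) a)
  have hab' : a ≠ b := fun h => hab (by rw [h])
  have hac : a ≠ c := fun h => haZ (h ▸ hcZ)
  have hbc : b ≠ c := fun h => hbZ (h ▸ hcZ)
  set A := φ a with hA
  set B := φ b with hB
  have hA3 : A ^ 3 = 1 := by rw [hA, ← map_pow, hpow, map_one]
  have hB3 : B ^ 3 = 1 := by rw [hB, ← map_pow, hpow, map_one]
  have hA1 : A ≠ 1 := fun h => haZ ((hker a).1 h)
  have hB1 : B ≠ 1 := fun h => hbZ ((hker b).1 h)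
  have hAinv : A⁻¹ = A ^ 2 := by
    rw [inv_eq_iff_mul_eq_one, ← pow_succ']
    exact hA3
  have hB4 : (B ^ 2) ^ 2 = B := by
    have h : B ^ (2 * 2) = B ^ (3 + 1) := by norm_num
    rw [← pow_mul, h, pow_succ, hB3, one_mul]
  have hA4 : (A ^ 2) ^ 2 = A := by
    have h : A ^ (2 * 2) = A ^ (3 + 1) := by norm_num
    rw [← pow_mul, h, pow_succ, hA3, one_mul]
  have hbnot : ∀ m : ℕ, B ≠ A ^ m := by
    intro m h
    apply hab
    have hz : b * (a ^ m)⁻¹ ∈ Z := by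
      rw [← hker, map_mul, map_inv, map_pow, ← hA, ← hB, h]
      group
    have hcom := (Subgroup.mem_center_iff.1 hz) a
    have hb' : b = (b * (a ^ m)⁻¹) * a ^ m := by group
    have hcomm_pow : a * a ^ m = a ^ m * a := ((Commute.refl a).pow_right m).eq
    calc a * b = a * ((b * (a ^ m)⁻¹) * a ^ m) := by rw [← hb']
      _ = (a * (b * (a ^ m)⁻¹)) * a ^ m := (mul_assoc _ _ _).symm
      _ = ((b * (a ^ m)⁻¹) * a) * a ^ m := by rw [hcom]
      _ = (b * (a ^ m)⁻¹) * (a * a ^ m) := mul_assoc _ _ _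
      _ = (b * (a ^ m)⁻¹) * (a ^ m * a) := by rw [hcomm_pow]
      _ = ((b * (a ^ m)⁻¹) * a ^ m) * a := (mul_assoc _ _ _).symm
      _ = b * a := by rw [← hb']
  have hindep : ∀ i j : ℕ, i ≤ 2 → j ≤ 2 → A ^ i * B ^ j = 1 → i = 0 ∧ j = 0 := by
    intro i j hi hj hij
    interval_cases i <;> interval_cases j <;>
        (try simp only [pow_zero, pow_one, one_mul, mul_one] at hij)
    · exact ⟨rfl, rfl⟩
    · exact absurd hij hB1
    · exact absurd (by rw [← hB4, hij, one_pow]) hB1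
    · exact absurd hij hA1
    · refine absurd ?_ (hbnot 2)
      rw [← hAinv]
      exact (mul_eq_one_iff_inv_eq.1 hij).symm
    · refine absurd ?_ (hbnot 1)
      have h2 : B ^ 2 = A⁻¹ := (mul_eq_one_iff_inv_eq.1 hij).symm
      rw [pow_one, ← hB4, h2, hAinv, hA4]
    · exact absurd (by rw [← hA4, hij, one_pow]) hA1
    · refine absurd ?_ (hbnot 1)
      have h2 : B = (A ^ 2)⁻¹ := (mul_eq_one_iff_inv_eq.1 hij).symm
      rw [pow_one, h2, ← inv_pow, hAinv, hA4]
    · refine absurd ?_ (hbnot 2)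
      have h2 : B ^ 2 = (A ^ 2)⁻¹ := (mul_eq_one_iff_inv_eq.1 hij).symm
      rw [← hB4, h2, ← inv_pow, hAinv, hA4]
  rintro ⟨l, hne, hle, hprod⟩
  have hSa : Multiset.count a ({a, a, b, b, c, c} : Multiset G) = 2 := by
    simp [Multiset.count_cons, hab', hac]
  have hSb : Multiset.count b ({a, a, b, b, c, c} : Multiset G) = 2 := by
    simp [Multiset.count_cons, hab'.symm, hbc]
  have hSc : Multiset.count c ({a, a, b, b, c, c} : Multiset G) = 2 := by
    simp [Multiset.count_cons, hac.symm, hbc.symm]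
  have hcnt := Multiset.le_iff_count.1 hle
  have hi : l.count a ≤ 2 := by
    have := hcnt a; rwa [Multiset.coe_count, hSa] at this
  have hj : l.count b ≤ 2 := by
    have := hcnt b; rwa [Multiset.coe_count, hSb] at this
  have hk : l.count c ≤ 2 := by
    have := hcnt c; rwa [Multiset.coe_count, hSc] at this
  have hmem : ∀ x ∈ l, x = a ∨ x = b ∨ x = c := by
    intro x hx
    have hxS : x ∈ ({a, a, b, b, c, c} : Multiset G) :=
      Multiset.mem_of_le hle (by exact_mod_cast hx)
    simp only [Multiset.insert_eq_cons, Multiset.mem_cons, Multiset.mem_singleton] at hxS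
    tauto
  have hdecomp : (l : Multiset G) =
      Multiset.replicate (l.count a) a + Multiset.replicate (l.count b) b +
        Multiset.replicate (l.count c) c := by
    ext x
    simp only [Multiset.count_add, Multiset.count_replicate, Multiset.coe_count]
    by_cases hxa : x = a
    · rw [hxa]; simp [hab', hac, Ne.symm hab', Ne.symm hac]
    · by_cases hxb : x = b
      · rw [hxb]; simp [hbc, Ne.symm hab', hab', Ne.symm hbc]
      · by_cases hxc : x = c
        · rw [hxc]; simp [hac, hbc, Ne.symm hac, Ne.symm hbc]
        · have hx : x ∉ l := fun h => by rcases hmem x h with h'|h'|h' <;> tauto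
          simp [hxa, hxb, hxc, (Ne.symm hxa : a ≠ x), (Ne.symm hxb : b ≠ x),
            (Ne.symm hxc : c ≠ x), List.count_eq_zero.2 hx]
  have hφprod : A ^ (l.count a) * B ^ (l.count b) * (φ c) ^ (l.count c) = 1 := by
    have h1 : (Multiset.map (φ : G → G ⧸ Z) (l : Multiset G)).prod = 1 := by
      rw [Multiset.map_coe, Multiset.prod_coe, ← map_list_prod, hprod, map_one]
    rw [hdecomp] at h1
    simpa [Multiset.prod_replicate] using h1
  have hφc : φ c = 1 := (hker c).2 hcZ
  rw [hφc, one_pow, mul_one] at hφprod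
  obtain ⟨ha0, hb0⟩ := hindep _ _ hi hj hφprod
  have hallc : ∀ x ∈ l, x = c := by
    intro x hx
    rcases hmem x hx with h | h | h
    · exact absurd (h ▸ hx) (List.count_eq_zero.1 ha0)
    · exact absurd (h ▸ hx) (List.count_eq_zero.1 hb0)
    · exact h
  have hlp : l.prod = c ^ l.length := List.prod_eq_pow_card l c hallc
  have hlenc : l.count c = l.length := List.count_eq_length.2 fun x hx => (hallc x hx).symm
  have hlen1 : 1 ≤ l.length := List.length_pos_iff.2 hne
  have hlen2 : l.length ≤ 2 := hlenc ▸ hk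
  rw [hlp] at hprod
  interval_cases h : l.length
  · rw [pow_one] at hprod; exact hc1 hprod
  · apply hc1
    have h3 := hpow c
    rw [pow_succ, hprod, one_mul] at h3
    exact h3

theorem stmt_15 {G : Type*} [Group G] [Fintype G]
    (hcard : Fintype.card G = 27)
    (hexp : Monoid.exponent G = 3)
    (hna : ∃ a b : G, a * b ≠ b * a) :
    (∃ S : Multiset G, Multiset.card S = 6 ∧ ¬ HasProdOneSubseq S) ∧
    6 ≤ smallDavenport G := by
  obtain ⟨a, b, hab⟩ := hna
  have hcomm := center_quot_comm hcard ⟨a, b, hab⟩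
  have hpow : ∀ g : G, g ^ 3 = 1 := fun g => by
    rw [← hexp]; exact Monoid.pow_exponent_eq_one g
  set S : Multiset G := {a, a, b, b, a*b*a⁻¹*b⁻¹, a*b*a⁻¹*b⁻¹} with hS
  have hScard : Multiset.card S = 6 := by simp [hS]
  have hno : ¬ HasProdOneSubseq S := no_subseq_main hcomm hpow a b hab
  have hmem : 6 ∈ {n | ∃ S : Multiset G, Multiset.card S = n ∧ ¬ HasProdOneSubseq S} :=
    ⟨S, hScard, hno⟩
  refine ⟨⟨S, hScard, hno⟩, ?_⟩
  apply le_csSup ?_ hmem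
  refine ⟨Fintype.card G, ?_⟩
  rintro n ⟨T, hcT, hT⟩
  by_contra hlt
  exact hT (hasProdOne_of_long T (by omega))
end
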